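/- arXiv:math/0308023 — 5 statements merged into one kernel-verified Lean document; each statement's English description precedes it below -/
import Mathlib

section
/- Let q be a root of unity of order d (q ≠ 1) in a field K of characteristic 0, and let l, m be nonnegative integers. Then the Gaussian binomial coefficient (m+l choose l)_q equals 0 if and only if ⌊(m+l)/d⌋ − ⌊m/d⌋ − ⌊l/d⌋ > 0. -/
/-- The Gaussian binomial coefficient `(n choose k)_q`. -/
def qbinom {K : Type*} [CommRing K] (q : K) : ℕ → ℕ → K
  | _, 0 => 1
  | 0, _ + 1 => 0
  | n + 1, k + 1 => qbinom q n k + q ^ (k + 1) * qbinom q n (k + 1)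

open Polynomial

lemma qbinom_zero_right {K : Type*} [CommRing K] (q : K) (n : ℕ) : qbinom q n 0 = 1 := by
  cases n <;> rfl

lemma qbinom_eq_zero_of_lt {K : Type*} [CommRing K] (q : K) :
    ∀ {n k : ℕ}, n < k → qbinom q n k = 0
  | 0, _ + 1, _ => rfl
  | n + 1, k + 1, h => by
    rw [qbinom, qbinom_eq_zero_of_lt q (Nat.lt_of_succ_lt_succ h),
      qbinom_eq_zero_of_lt q (Nat.lt_of_succ_lt h)]
    ring

lemma qbinom_self {K : Type*} [CommRing K] (q : K) : ∀ n : ℕ, qbinom q n n = 1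
  | 0 => rfl
  | n + 1 => by
    rw [qbinom, qbinom_self q n, qbinom_eq_zero_of_lt q (Nat.lt_succ_self n)]
    ring

lemma eval_qbinom {K : Type*} [CommRing K] (q : K) :
    ∀ n k : ℕ, eval q (qbinom (X : K[X]) n k) = qbinom q n k
  | _, 0 => by rw [qbinom_zero_right, qbinom_zero_right, eval_one]
  | 0, _ + 1 => by rw [show qbinom (X : K[X]) 0 (_+1) = 0 from rfl]; simp [qbinom]
  | n + 1, k + 1 => by
    rw [qbinom, qbinom, eval_add, eval_mul, eval_pow, eval_X,
      eval_qbinom q n k, eval_qbinom q n (k + 1)]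

/-- the product `∏_{i=1}^n (1 - X^i)` -/
noncomputable def Fpoly (K : Type*) [CommRing K] (n : ℕ) : K[X] :=
  ∏ i ∈ Finset.range n, (1 - X ^ (i + 1))

lemma Fpoly_succ (K : Type*) [CommRing K] (n : ℕ) :
    Fpoly K (n + 1) = Fpoly K n * (1 - X ^ (n + 1)) := by
  rw [Fpoly, Fpoly, Finset.prod_range_succ]

lemma one_sub_X_pow_ne_zero (K : Type*) [Field K] (i : ℕ) :
    (1 - X ^ (i + 1) : K[X]) ≠ 0 := by
  intro h
  have := congrArg (eval 0) h
  simp at this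

lemma Fpoly_ne_zero (K : Type*) [Field K] (n : ℕ) : Fpoly K n ≠ 0 :=
  Finset.prod_ne_zero_iff.2 fun i _ => one_sub_X_pow_ne_zero K i

lemma key_identity (K : Type*) [Field K] :
    ∀ n k : ℕ, k ≤ n →
      qbinom (X : K[X]) n k * Fpoly K k * Fpoly K (n - k) = Fpoly K n
  | n, 0, _ => by
    rw [qbinom_zero_right, Nat.sub_zero]
    simp [Fpoly]
  | 0, k + 1, h => absurd h (by omega)
  | n + 1, k + 1, h => by
    rcases eq_or_lt_of_le h with heq | hlt
    · -- k + 1 = n + 1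
      obtain rfl : k = n := by omega
      rw [qbinom_self, Nat.sub_self]
      simp [Fpoly]
    · have hk : k ≤ n := by omega
      have hk1 : k + 1 ≤ n := by omega
      have h1 := key_identity K n k hk
      have h2 := key_identity K n (k + 1) hk1
      have hs : n - k = n - (k + 1) + 1 := by omega
      rw [qbinom, add_mul, add_mul, Nat.succ_sub_succ, hs, Fpoly_succ, Fpoly_succ]
      have e1 : qbinom (X : K[X]) n k * (Fpoly K k * (1 - X ^ (k + 1))) *
          (Fpoly K (n - (k + 1)) * (1 - X ^ (n - (k + 1) + 1))) =
          (qbinom (X : K[X]) n k * Fpoly K k * Fpoly K (n - k)) * (1 - X ^ (k + 1)) := by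
        rw [hs, Fpoly_succ]; ring
      have e2 : X ^ (k + 1) * qbinom (X : K[X]) n (k + 1) * (Fpoly K k * (1 - X ^ (k + 1))) *
          (Fpoly K (n - (k + 1)) * (1 - X ^ (n - (k + 1) + 1))) =
          (qbinom (X : K[X]) n (k + 1) * Fpoly K (k + 1) * Fpoly K (n - (k + 1))) *
            (X ^ (k + 1) * (1 - X ^ (n - (k + 1) + 1))) := by
        rw [Fpoly_succ]; ring
      rw [e1, e2, h1, h2, Fpoly_succ]
      have hx : X ^ (k + 1) * (X ^ (n - (k + 1) + 1) : K[X]) = X ^ (n + 1) := by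
        rw [← pow_add]; congr 1; omega
      rw [← hx]
      ring

section roots

variable {K : Type*} [Field K] [CharZero K] (q : K) (d : ℕ)
  (hd : 0 < d) (h1 : q ^ d = 1) (h2 : ∀ k : ℕ, 0 < k → k < d → q ^ k ≠ 1)

include hd h1 h2 in
lemma pow_eq_one_iff_dvd (i : ℕ) : q ^ i = 1 ↔ d ∣ i := by
  constructor
  · intro h
    have hmod : q ^ (i % d) = 1 := by
      conv at h => rw [← Nat.div_add_mod i d]
      rw [pow_add, pow_mul, h1, one_pow, one_mul] at h
      exact h
    by_contra hnd
    have : 0 < i % d := Nat.pos_of_ne_zero (fun h0 => hnd (Nat.dvd_of_mod_eq_zero h0))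
    exact h2 _ this (Nat.mod_lt _ hd) hmod
  · rintro ⟨c, rfl⟩
    rw [pow_mul, h1, one_pow]

include hd h1 in
lemma q_ne_zero : q ≠ 0 := by
  intro h
  rw [h, zero_pow hd.ne'] at h1
  exact zero_ne_one h1

include hd h1 h2 in
lemma rootMult_factor (i : ℕ) :
    rootMultiplicity q (1 - X ^ (i + 1) : K[X]) = if d ∣ (i + 1) then 1 else 0 := by
  by_cases hdvd : d ∣ (i + 1)
  · rw [if_pos hdvd]
    have hroot : IsRoot (1 - X ^ (i + 1) : K[X]) q := by
      simp [IsRoot, (pow_eq_one_iff_dvd q d hd h1 h2 (i + 1)).2 hdvd]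
    have hpos : 0 < rootMultiplicity q (1 - X ^ (i + 1) : K[X]) :=
      (rootMultiplicity_pos (one_sub_X_pow_ne_zero K i)).2 hroot
    have hle : rootMultiplicity q (1 - X ^ (i + 1) : K[X]) ≤ 1 := by
      by_contra hgt
      push_neg at hgt
      have hder : IsRoot (derivative (1 - X ^ (i + 1) : K[X])) q := by
        have := isRoot_iterate_derivative_of_lt_rootMultiplicity (p := (1 - X ^ (i+1) : K[X]))
          (t := q) (n := 1) hgt
        simpa using this
      rw [IsRoot] at hder
      have hder' : ((i : K) + 1) * q ^ i = 0 := by simpa using hder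
      rcases mul_eq_zero.1 hder' with h | h
      · exact Nat.cast_add_one_ne_zero i h
      · exact pow_ne_zero i (q_ne_zero q d hd h1) h
    omega
  · rw [if_neg hdvd]
    apply rootMultiplicity_eq_zero
    rw [IsRoot]
    simp only [eval_sub, eval_one, eval_pow, eval_X, sub_eq_zero]
    intro h
    exact hdvd ((pow_eq_one_iff_dvd q d hd h1 h2 (i + 1)).1 h.symm)

include hd h1 h2 in
lemma rootMult_Fpoly : ∀ n : ℕ, rootMultiplicity q (Fpoly K n) = n / d
  | 0 => by simp [Fpoly, Nat.zero_div]
  | n + 1 => by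
    rw [Fpoly_succ, rootMultiplicity_mul
      (mul_ne_zero (Fpoly_ne_zero K n) (one_sub_X_pow_ne_zero K n)),
      rootMult_Fpoly n, rootMult_factor q d hd h1 h2 n, Nat.succ_div]

end roots

/-- for `q ≠ 1` a root of unity of order `d` in a field of characteristic 0,
`(m+l choose l)_q = 0` iff `⌊(m+l)/d⌋ - ⌊m/d⌋ - ⌊l/d⌋ > 0`. -/
theorem stmt1 {K : Type*} [Field K] [CharZero K] (q : K) (d : ℕ)
    (hd : 0 < d) (hq1 : q ≠ 1)
    (h1 : q ^ d = 1) (h2 : ∀ k : ℕ, 0 < k → k < d → q ^ k ≠ 1)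
    (l m : ℕ) :
    qbinom q (m + l) l = 0 ↔ 0 < (m + l) / d - m / d - l / d := by
  have hkey := key_identity K (m + l) l (Nat.le_add_left l m)
  have hsub : m + l - l = m := by omega
  rw [hsub] at hkey
  have hQ : qbinom (X : K[X]) (m + l) l ≠ 0 := by
    intro h
    rw [h, zero_mul, zero_mul] at hkey
    exact Fpoly_ne_zero K (m + l) hkey.symm
  have hmul := rootMultiplicity_mul (x := q)
    (p := qbinom (X : K[X]) (m + l) l * Fpoly K l) (q := Fpoly K m)
    (hkey ▸ Fpoly_ne_zero K (m + l))
  rw [rootMultiplicity_mul (mul_ne_zero hQ (Fpoly_ne_zero K l)), hkey,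
    rootMult_Fpoly q d hd h1 h2, rootMult_Fpoly q d hd h1 h2,
    rootMult_Fpoly q d hd h1 h2] at hmul
  have heval : qbinom q (m + l) l = eval q (qbinom (X : K[X]) (m + l) l) :=
    (eval_qbinom q (m + l) l).symm
  rw [heval]
  constructor
  · intro h
    have : 0 < rootMultiplicity q (qbinom (X : K[X]) (m + l) l) :=
      (rootMultiplicity_pos hQ).2 h
    omega
  · intro h
    have : 0 < rootMultiplicity q (qbinom (X : K[X]) (m + l) l) := by omega
    exact (rootMultiplicity_pos hQ).1 this
end

section
/- Let A be the K-algebra generated by g and x subject to relations g^n = 1, x^d = μ(1 − g^d), x·g = q·g·x, where q ∈ K is a root of unity of order d, d divides n, and μ ∈ K. Then the center of A has K-basis {1, g^d, g^{2d}, …, g^{n−d}}. -/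
/-!
The monomials `g^i x^j` (`i : ZMod n`, `j : ZMod d`) span `A`. They are linearly independent
because the formulas for left multiplication in this basis define an action of `A` on the free
module over `ZMod n × ZMod d`, in which `g^i x^j` maps the delta at `(0, 0)` to the delta at
`(i, j)`.
Write a central `z` in this basis. Since `x^j g = q^j g x^j`, commuting with `g` multiplies the
coefficient of `g^i x^j` by `q^j`, so only `j = 0` survives; commuting with `x` then multiplies the
coefficient of `g^i` by `q^i`, so only `d ∣ i` survives. Conversely `g^d` is central as `q^d = 1`.
-/

open FreeAlgebra in
/-- Relations of the algebra `A(n, d, μ, q)`: `g^n = 1`, `x^d = μ(1 - g^d)`, `xg = q·gx`,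
where `g` and `x` are the generators indexed by `false` and `true`. -/
inductive ARel (K : Type*) [Field K] (n d : ℕ) (mu q : K) :
    FreeAlgebra K Bool → FreeAlgebra K Bool → Prop
  | g : ARel K n d mu q (ι K false ^ n) 1
  | x : ARel K n d mu q (ι K true ^ d) (mu • (1 - ι K false ^ d))
  | comm : ARel K n d mu q (ι K true * ι K false) (q • (ι K false * ι K true))

/-- The algebra `A(n, d, μ, q)`. -/
abbrev AAlg (K : Type*) [Field K] (n d : ℕ) (mu q : K) := RingQuot (ARel K n d mu q)

/-- The generator `g` of `A(n, d, μ, q)`. -/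
noncomputable def Agen (K : Type*) [Field K] (n d : ℕ) (mu q : K) : AAlg K n d mu q :=
  RingQuot.mkAlgHom K (ARel K n d mu q) (FreeAlgebra.ι K false)

/-- The generator `x` of `A(n, d, μ, q)`. -/
noncomputable def Axgen (K : Type*) [Field K] (n d : ℕ) (mu q : K) : AAlg K n d mu q :=
  RingQuot.mkAlgHom K (ARel K n d mu q) (FreeAlgebra.ι K true)

open Finsupp (single)

theorem Submodule.span_eq_top_of_mul_mem {R A ι : Type*} [CommSemiring R] [Semiring A]
    [Algebra R A] {s : Set A} (hs : Algebra.adjoin R s = ⊤) {v : ι → A}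
    (h1 : (1 : A) ∈ span R (Set.range v))
    (hmul : ∀ a ∈ s, ∀ i, a * v i ∈ span R (Set.range v)) : span R (Set.range v) = ⊤ := by
  set M := span R (Set.range v)
  have hsM : ∀ a ∈ s, ∀ m ∈ M, a * m ∈ M := fun a ha m hm => by
    induction hm using span_induction with
    | mem _ hm => obtain ⟨i, rfl⟩ := hm; exact hmul a ha i
    | zero => simp
    | add m m' _ _ h h' => rw [mul_add]; exact M.add_mem h h'
    | smul r m _ h => rw [mul_smul_comm]; exact M.smul_mem r h
  refine eq_top_iff'.2 fun a => ?_
  suffices ∀ m ∈ M, a * m ∈ M by simpa using this 1 h1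
  induction (hs ▸ Algebra.mem_top : a ∈ Algebra.adjoin R s) using Algebra.adjoin_induction with
  | mem a ha => exact hsM a ha
  | algebraMap r => exact fun m hm => Algebra.smul_def r m ▸ M.smul_mem r hm
  | add a b _ _ ha hb =>
    exact fun m hm => (add_mul a b m).symm ▸ M.add_mem (ha m hm) (hb m hm)
  | mul a b _ _ ha hb => exact fun m hm => (mul_assoc a b m).symm ▸ ha _ (hb m hm)

theorem LinearIndependent.coeff_mul_eq_of_commute {R A ι : Type*} [CommSemiring R] [Semiring A]
    [Algebra R A] [Fintype ι] {v w : ι → A} (hw : LinearIndependent R w) {b : A}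
    {α β : ι → R}
    (hvb : ∀ i, v i * b = α i • w i) (hbv : ∀ i, b * v i = β i • w i) {c : ι → R}
    (hc : Commute (∑ i, c i • v i) b) (i : ι) : c i * α i = c i * β i := by
  refine Fintype.linearIndependent_iffₛ.1 hw (fun i => c i * α i) (fun i => c i * β i) ?_ i
  calc ∑ i, (c i * α i) • w i = (∑ i, c i • v i) * b := by
        simp only [Finset.sum_mul, smul_mul_assoc, hvb, mul_smul]
    _ = b * ∑ i, c i • v i := hc.eq
    _ = ∑ i, (c i * β i) • w i := by simp only [Finset.mul_sum, mul_smul_comm, hbv, mul_smul]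

section QCommute

variable {R A : Type*} [CommSemiring R] [Semiring A] [Algebra R A] {a b : A} {r : R}

theorem mul_pow_eq_smul_pow_mul (h : a * b = r • (b * a)) (k : ℕ) :
    a * b ^ k = r ^ k • (b ^ k * a) := by
  induction k with
  | zero => simp
  | succ k ih =>
    rw [pow_succ, ← mul_assoc, ih, smul_mul_assoc, mul_assoc, h, mul_smul_comm, smul_smul,
      ← mul_assoc, pow_succ]

theorem pow_mul_eq_smul_mul_pow (h : a * b = r • (b * a)) (k : ℕ) :
    a ^ k * b = r ^ k • (b * a ^ k) := by
  induction k with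
  | zero => simp
  | succ k ih =>
    rw [pow_succ', mul_assoc, ih, mul_smul_comm, ← mul_assoc, h, smul_mul_assoc, smul_smul,
      ← pow_succ, mul_assoc, ← pow_succ']

end QCommute

theorem pow_zmod_val_natCast {M : Type*} [Monoid M] {n : ℕ} {u : M} (hu : u ^ n = 1) (a : ℕ) :
    u ^ (a : ZMod n).val = u ^ a := by
  rw [ZMod.val_natCast, ← pow_eq_pow_mod _ hu]

theorem pow_zmod_val_add {M : Type*} [Monoid M] {n : ℕ} [NeZero n] {u : M} (hu : u ^ n = 1)
    (a b : ZMod n) : u ^ (a + b).val = u ^ a.val * u ^ b.val := by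
  rw [ZMod.val_add, ← pow_eq_pow_mod _ hu, pow_add]

theorem pow_zmod_val_add_one {M : Type*} [Monoid M] {n : ℕ} [NeZero n] {u : M} (hu : u ^ n = 1)
    (a : ZMod n) : u ^ (a + 1).val = u ^ a.val * u := by
  rw [pow_zmod_val_add hu, ← Nat.cast_one, pow_zmod_val_natCast hu, pow_one]

namespace AAlg

variable {K : Type*} [Field K] {n d : ℕ} {mu q : K}

local notation "g" => Agen K n d mu q
local notation "x" => Axgen K n d mu q

theorem agen_pow_n : g ^ n = 1 := by
  rw [Agen, ← map_pow, RingQuot.mkAlgHom_rel K ARel.g, map_one]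

theorem axgen_pow_d : x ^ d = mu • (1 - g ^ d) := by
  rw [Axgen, ← map_pow, RingQuot.mkAlgHom_rel K ARel.x, map_smul, map_sub, map_one, map_pow,
    Agen]

theorem axgen_mul_agen : x * g = q • (g * x) := by
  rw [Axgen, Agen, ← map_mul, RingQuot.mkAlgHom_rel K ARel.comm, map_smul, map_mul]

theorem adjoin_agen_axgen : Algebra.adjoin K {g, x} = ⊤ := by
  have hgens : ({g, x} : Set (AAlg K n d mu q)) =
      RingQuot.mkAlgHom K (ARel K n d mu q) '' Set.range (FreeAlgebra.ι K) := by
    rw [← Set.range_comp]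
    ext
    simp [Agen, Axgen]
  rw [hgens, Algebra.adjoin_image, FreeAlgebra.adjoin_range_ι, Algebra.map_top,
    (AlgHom.range_eq_top _).2 (RingQuot.mkAlgHom_surjective K _)]

theorem agen_pow_d_mem_center (hq : q ^ d = 1) :
    g ^ d ∈ Subalgebra.center K (AAlg K n d mu q) := by
  refine Subalgebra.mem_center_iff.2 fun b => ?_
  have hb : b ∈ Algebra.adjoin K {g, x} := by rw [adjoin_agen_axgen]; trivial
  refine (Algebra.commute_of_mem_adjoin_of_forall_mem_commute hb ?_).eq.symm
  rintro _ (rfl | rfl)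
  · exact (Commute.self_pow _ _).symm
  · rw [commute_iff_eq, mul_pow_eq_smul_pow_mul axgen_mul_agen, hq, one_smul]

variable (n d mu q) in
noncomputable def monomial (p : ZMod n × ZMod d) : AAlg K n d mu q :=
  g ^ p.1.val * x ^ p.2.val

theorem monomial_natCast (a : ℕ) {b : ℕ} (hb : b < d) :
    monomial n d mu q ((a : ZMod n), (b : ZMod d)) = g ^ a * x ^ b := by
  rw [monomial, pow_zmod_val_natCast agen_pow_n, ZMod.val_cast_of_lt hb]

theorem monomial_zero_mul_axgen (hd : 1 < d) (i : ZMod n) :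
    monomial n d mu q (i, 0) * x = monomial n d mu q (i, 1) := by
  simp [monomial, ZMod.val_one_eq_one_mod, Nat.mod_eq_of_lt hd]

theorem axgen_mul_monomial_zero (hd : 1 < d) (i : ZMod n) :
    x * monomial n d mu q (i, 0) = q ^ i.val • monomial n d mu q (i, 1) := by
  simpa [monomial, ZMod.val_one_eq_one_mod, Nat.mod_eq_of_lt hd] using
    mul_pow_eq_smul_pow_mul axgen_mul_agen i.val

theorem agen_mul_monomial [NeZero n] (p : ZMod n × ZMod d) :
    g * monomial n d mu q p = monomial n d mu q (p.1 + 1, p.2) := by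
  rw [monomial, monomial, pow_zmod_val_add_one agen_pow_n, pow_mul_comm', mul_assoc]

theorem monomial_mul_agen [NeZero n] (p : ZMod n × ZMod d) :
    monomial n d mu q p * g = q ^ p.2.val • monomial n d mu q (p.1 + 1, p.2) := by
  rw [monomial, monomial, mul_assoc, pow_mul_eq_smul_mul_pow axgen_mul_agen p.2.val,
    mul_smul_comm, ← mul_assoc, pow_zmod_val_add_one agen_pow_n]

theorem span_monomial_eq_top [NeZero d] :
    Submodule.span K (Set.range (monomial n d mu q)) = ⊤ := by
  have hmem (a b : ℕ) (hb : b < d) :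
      g ^ a * x ^ b ∈ Submodule.span K (Set.range (monomial n d mu q)) := by
    rw [← monomial_natCast a hb]; exact Submodule.subset_span ⟨_, rfl⟩
  refine Submodule.span_eq_top_of_mul_mem adjoin_agen_axgen
    (by simpa using hmem 0 0 (NeZero.pos d)) ?_
  rintro _ (rfl | rfl) ⟨i, j⟩
  · rw [monomial, ← mul_assoc, ← pow_succ']
    exact hmem _ _ j.val_lt
  · rw [monomial, ← mul_assoc, mul_pow_eq_smul_pow_mul axgen_mul_agen i.val, smul_mul_assoc,
      mul_assoc, ← pow_succ']
    refine Submodule.smul_mem _ _ ?_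
    obtain hj | hj : j.val + 1 < d ∨ j.val + 1 = d := by have := j.val_lt; omega
    · exact hmem _ _ hj
    · rw [hj, axgen_pow_d, mul_smul_comm, mul_sub, mul_one, ← pow_add]
      exact Submodule.smul_mem _ _ (Submodule.sub_mem _ (by simpa using hmem _ 0 (NeZero.pos d))
        (by simpa using hmem _ 0 (NeZero.pos d)))

section RegularRepresentation

/- Left multiplication by `g` and `x` in the basis `g^i x^j` of `A`, with `single (i, j) 1`
standing for `g^i x^j`: `x g^i x^j = q^i g^i x^(j+1)`, and `x^d = μ(1 - g^d)` when `j + 1 = d`. -/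

variable (K n d) in
noncomputable def gAct : Module.End K ((ZMod n × ZMod d) →₀ K) :=
  Finsupp.linearCombination K fun p => single (p.1 + 1, p.2) 1

variable (n d mu q) in
noncomputable def xAct : Module.End K ((ZMod n × ZMod d) →₀ K) :=
  Finsupp.linearCombination K fun p => q ^ p.1.val •
    if p.2 + 1 = 0 then mu • (single (p.1, 0) 1 - single (p.1 + d, 0) 1)
    else single (p.1, p.2 + 1) 1

theorem gAct_single (p : ZMod n × ZMod d) :
    gAct K n d (single p 1) = single (p.1 + 1, p.2) 1 := by
  simp [gAct]

theorem xAct_single (p : ZMod n × ZMod d) :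
    xAct n d mu q (single p 1) = q ^ p.1.val •
      if p.2 + 1 = 0 then mu • (single (p.1, 0) 1 - single (p.1 + d, 0) 1)
      else single (p.1, p.2 + 1) 1 := by
  simp only [xAct, Finsupp.linearCombination_single, one_smul]

theorem gAct_pow_single (k : ℕ) (p : ZMod n × ZMod d) :
    (gAct K n d ^ k) (single p 1) = single (p.1 + k, p.2) 1 := by
  induction k with
  | zero => simp
  | succ k ih => rw [pow_succ', Module.End.mul_apply, ih, gAct_single, Nat.cast_succ, add_assoc]

theorem gAct_pow_n : gAct K n d ^ n = 1 :=
  Finsupp.basisSingleOne.ext fun p => by simp [gAct_pow_single]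

theorem xAct_single_natCast (i : ZMod n) (j : ℕ) :
    xAct n d mu q (single (i, (j : ZMod d)) 1) = q ^ i.val •
      if d ∣ j + 1 then mu • (single (i, 0) 1 - single (i + d, 0) 1)
      else single (i, ((j + 1 : ℕ) : ZMod d)) 1 := by
  simp only [xAct_single, ← ZMod.natCast_eq_zero_iff, Nat.cast_succ]

theorem xAct_pow_single (i : ZMod n) {j k : ℕ} (h : j + k < d) :
    (xAct n d mu q ^ k) (single (i, (j : ZMod d)) 1) =
      (q ^ i.val) ^ k • single (i, ((j + k : ℕ) : ZMod d)) 1 := by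
  induction k with
  | zero => simp
  | succ k ih =>
    rw [pow_succ', Module.End.mul_apply, ih (by omega), map_smul, xAct_single_natCast,
      if_neg (Nat.not_dvd_of_pos_of_lt (by omega) (by omega)), smul_smul, ← pow_succ, add_assoc]

variable [NeZero n]

theorem xAct_mul_gAct (hqn : q ^ n = 1) :
    xAct n d mu q * gAct K n d = q • (gAct K n d * xAct n d mu q) :=
  Finsupp.basisSingleOne.ext fun p => by
    simp only [Finsupp.coe_basisSingleOne, Module.End.mul_apply, LinearMap.smul_apply, gAct_single,
      xAct_single, map_smul, pow_zmod_val_add_one hqn, smul_smul]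
    split_ifs <;> simp [gAct_single, add_right_comm, mul_comm]

variable [NeZero d]

/- Starting from `single (i, m) 1`, the `d` steps of `xAct` wrap around once and collect the
factor `(q^i)^d = 1`. -/
theorem xAct_pow_d (hqn : q ^ n = 1) (hqd : q ^ d = 1) :
    xAct n d mu q ^ d = mu • (1 - gAct K n d ^ d) := by
  refine Finsupp.basisSingleOne.ext fun ⟨i, j⟩ => ?_
  obtain ⟨m, hm, rfl⟩ : ∃ m < d, (m : ZMod d) = j :=
    ⟨j.val, j.val_lt, ZMod.natCast_zmod_val j⟩
  have hsplit :
      xAct n d mu q ^ d = xAct n d mu q ^ m * xAct n d mu q * xAct n d mu q ^ (d - 1 - m) := by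
    rw [← pow_succ, ← pow_add]; congr 1; omega
  have hqi : (q ^ i.val) ^ d = 1 := by rw [← pow_mul, mul_comm, pow_mul, hqd, one_pow]
  have hqid : q ^ (i + d).val = q ^ i.val := by
    rw [pow_zmod_val_add hqn, pow_zmod_val_natCast hqn, hqd, mul_one]
  have hlow := xAct_pow_single (d := d) (mu := mu) (q := q) i (j := 0) (k := m) (by omega)
  have hlow' := xAct_pow_single (d := d) (mu := mu) (q := q) (i + (d : ZMod n)) (j := 0) (k := m)
    (by omega)
  simp only [Nat.cast_zero, zero_add, hqid] at hlow hlow'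
  have hwrap : d ∣ d - 1 + 1 := by rw [Nat.sub_add_cancel (NeZero.one_le)]
  rw [Finsupp.coe_basisSingleOne, hsplit, Module.End.mul_apply, Module.End.mul_apply,
    xAct_pow_single i (j := m) (k := d - 1 - m) (by omega), show m + (d - 1 - m) = d - 1 by omega,
    map_smul, xAct_single_natCast, if_pos hwrap, map_smul, map_smul, map_smul, map_sub, hlow, hlow']
  simp only [LinearMap.smul_apply, LinearMap.sub_apply, Module.End.one_apply, gAct_pow_single]
  have hcoeff : (q ^ i.val) ^ (d - 1 - m) * q ^ i.val * (q ^ i.val) ^ m = 1 := by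
    rw [← pow_succ, ← pow_add, show d - 1 - m + 1 + m = d by omega, hqi]
  match_scalars
  · linear_combination mu * hcoeff
  · linear_combination -mu * hcoeff

variable (mu) in
noncomputable def rep (hqn : q ^ n = 1) (hqd : q ^ d = 1) :
    AAlg K n d mu q →ₐ[K] Module.End K ((ZMod n × ZMod d) →₀ K) :=
  RingQuot.liftAlgHom K ⟨FreeAlgebra.lift K fun b => if b then xAct n d mu q else gAct K n d, by
    rintro _ _ ⟨⟩ <;> simp [gAct_pow_n, xAct_pow_d hqn hqd, xAct_mul_gAct hqn]⟩

theorem rep_agen (hqn : q ^ n = 1) (hqd : q ^ d = 1) :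
    rep mu hqn hqd (Agen K n d mu q) = gAct K n d := by
  simp [rep, Agen]

theorem rep_axgen (hqn : q ^ n = 1) (hqd : q ^ d = 1) :
    rep mu hqn hqd (Axgen K n d mu q) = xAct n d mu q := by
  simp [rep, Axgen]

theorem rep_monomial_apply_single_zero (hqn : q ^ n = 1) (hqd : q ^ d = 1)
    (p : ZMod n × ZMod d) : rep mu hqn hqd (monomial n d mu q p) (single 0 1) = single p 1 := by
  have hx := xAct_pow_single (d := d) (mu := mu) (q := q) (0 : ZMod n) (j := 0) (k := p.2.val)
    (by simpa using p.2.val_lt)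
  simp only [Nat.cast_zero, zero_add, ZMod.val_zero, pow_zero, one_pow, one_smul,
    ZMod.natCast_zmod_val] at hx
  rw [monomial, map_mul, map_pow, map_pow, rep_agen, rep_axgen, Module.End.mul_apply,
    Prod.zero_eq_mk, hx]
  simp [gAct_pow_single]

theorem linearIndependent_monomial (hqn : q ^ n = 1) (hqd : q ^ d = 1) :
    LinearIndependent K (monomial n d mu q) := by
  refine LinearIndependent.of_comp
    ((LinearMap.applyₗ (single 0 1)).comp (rep mu hqn hqd).toLinearMap) ?_
  convert (Finsupp.basisSingleOne (R := K)).linearIndependent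
  ext1 p
  simp [rep_monomial_apply_single_zero]

end RegularRepresentation

section Center

variable [NeZero n] [NeZero d]

theorem coeff_eq_zero_of_commute_agen (hqn : q ^ n = 1) (hq : IsPrimitiveRoot q d)
    {c : ZMod n × ZMod d → K} (hc : Commute (∑ p, c p • monomial n d mu q p) g)
    {p : ZMod n × ZMod d} (hp : p.2 ≠ 0) : c p = 0 := by
  have hshift : Function.Injective fun p : ZMod n × ZMod d => (p.1 + 1, p.2) :=
    fun a b h => by simpa [Prod.ext_iff] using h
  have := ((linearIndependent_monomial hqn hq.pow_eq_one).comp _ hshift).coeff_mul_eq_of_commute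
    monomial_mul_agen (β := 1) (fun p => (agen_mul_monomial p).trans (one_smul K _).symm) hc p
  refine (mul_eq_mul_left_iff.1 this).resolve_left fun h => hp ?_
  rw [Pi.one_apply, hq.pow_eq_one_iff_dvd] at h
  exact (ZMod.val_eq_zero _).1 (Nat.eq_zero_of_dvd_of_lt h p.2.val_lt)

theorem coeff_eq_zero_of_commute_axgen (hqn : q ^ n = 1) (hq : IsPrimitiveRoot q d) (hd : 1 < d)
    {c : ZMod n → K} (hc : Commute (∑ i, c i • monomial n d mu q (i, 0)) x)
    {i : ZMod n} (hi : ¬ d ∣ i.val) : c i = 0 := by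
  have := ((linearIndependent_monomial hqn hq.pow_eq_one).comp _
    (Prod.mk_left_injective 1)).coeff_mul_eq_of_commute (α := 1)
    (fun i => (monomial_zero_mul_axgen hd i).trans (one_smul K _).symm)
    (axgen_mul_monomial_zero hd) hc i
  refine (mul_eq_mul_left_iff.1 this).resolve_left fun h => hi ?_
  rwa [Pi.one_apply, eq_comm, hq.pow_eq_one_iff_dvd] at h

theorem mem_span_agen_pow_of_mem_center (hq : IsPrimitiveRoot q d) (hd : 1 < d) (hdn : d ∣ n)
    {z : AAlg K n d mu q} (hz : z ∈ Subalgebra.center K (AAlg K n d mu q)) :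
    z ∈ Submodule.span K (Set.range fun k : Fin (n / d) => g ^ (d * k)) := by
  have hqn : q ^ n = 1 := (hq.pow_eq_one_iff_dvd n).2 hdn
  have hz' : z ∈ Submodule.span K (Set.range (monomial n d mu q)) := by
    rw [span_monomial_eq_top]; trivial
  obtain ⟨c, rfl⟩ := (Submodule.mem_span_range_iff_exists_fun K).1 hz'
  have hcomm (b : AAlg K n d mu q) : Commute (∑ p, c p • monomial n d mu q p) b :=
    (Subalgebra.mem_center_iff.1 hz b).symm
  have hsum :
      ∑ p, c p • monomial n d mu q p = ∑ i, c (i, 0) • monomial n d mu q (i, 0) := by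
    rw [Fintype.sum_prod_type]
    exact Finset.sum_congr rfl fun i _ => Fintype.sum_eq_single 0 fun j hj => by
      rw [coeff_eq_zero_of_commute_agen hqn hq (hcomm g) (p := (i, j)) hj, zero_smul]
  rw [hsum] at hcomm ⊢
  refine Submodule.sum_mem _ fun i _ => ?_
  by_cases hi : d ∣ i.val
  · obtain ⟨k, hk⟩ := hi
    have hk' : k < n / d := (Nat.lt_div_iff_mul_lt' hdn k).2 (hk ▸ i.val_lt)
    refine Submodule.smul_mem _ _ (Submodule.subset_span ⟨⟨k, hk'⟩, ?_⟩)
    simp [monomial, hk]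
  · rw [coeff_eq_zero_of_commute_axgen hqn hq hd (hcomm x) hi, zero_smul]
    exact Submodule.zero_mem _

theorem linearIndependent_agen_pow (hqn : q ^ n = 1) (hqd : q ^ d = 1) :
    LinearIndependent K fun k : Fin (n / d) => g ^ (d * k) := by
  have hlt (k : Fin (n / d)) : d * k < n :=
    ((Nat.mul_lt_mul_left (NeZero.pos d)).2 k.isLt).trans_le (Nat.mul_div_le n d)
  have hinj :
      Function.Injective fun k : Fin (n / d) => (((d * k : ℕ) : ZMod n), (0 : ZMod d)) := by
    intro a b h
    have := congrArg (ZMod.val ∘ Prod.fst) h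
    simp only [Function.comp, ZMod.val_cast_of_lt (hlt a), ZMod.val_cast_of_lt (hlt b)] at this
    exact Fin.ext (Nat.eq_of_mul_eq_mul_left (NeZero.pos d) this)
  convert (linearIndependent_monomial hqn hqd).comp _ hinj with k
  simpa using (monomial_natCast (n := n) (mu := mu) (q := q) (d * k) (NeZero.pos d)).symm

end Center

end AAlg

open AAlg in
theorem stmt5_general {K : Type*} [Field K] (n d : ℕ) (mu q : K)
    (hn : 0 < n) (hd : 2 ≤ d) (hdvd : d ∣ n)
    (h1 : q ^ d = 1) (h2 : ∀ k : ℕ, 0 < k → k < d → q ^ k ≠ 1) :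
    ∃ B : Module.Basis (Fin (n / d)) K (Subalgebra.center K (AAlg K n d mu q)),
      ∀ i : Fin (n / d), (B i : AAlg K n d mu q) = Agen K n d mu q ^ (d * (i : ℕ)) := by
  have : NeZero n := ⟨hn.ne'⟩
  have : NeZero d := ⟨by omega⟩
  have hq : IsPrimitiveRoot q d := .mk_of_lt q (by omega) h1 h2
  let F (k : Fin (n / d)) : Subalgebra.center K (AAlg K n d mu q) :=
    ⟨Agen K n d mu q ^ (d * k),
      pow_mul (Agen K n d mu q) d k ▸ pow_mem (agen_pow_d_mem_center h1) k⟩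
  have hF : LinearIndependent K F := .of_comp (Subalgebra.center K _).val.toLinearMap
    (linearIndependent_agen_pow ((hq.pow_eq_one_iff_dvd n).2 hdvd) h1)
  have hspan : ⊤ ≤ Submodule.span K (Set.range F) := by
    rintro ⟨z, hz⟩ -
    obtain ⟨c, hc⟩ := (Submodule.mem_span_range_iff_exists_fun K).1
      (mem_span_agen_pow_of_mem_center hq hd hdvd hz)
    exact (Submodule.mem_span_range_iff_exists_fun K).2 ⟨c, Subtype.ext (by simpa [F] using hc)⟩
  exact ⟨.mk hF hspan, fun k => by rw [Module.Basis.mk_apply]⟩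

/-- the center of `A(n, d, μ, q)` has `K`-basis `{1, g^d, g^{2d}, …, g^{n-d}}`,
i.e. a basis indexed by `Fin (n/d)` whose `i`-th element is `g^(d·i)`. -/
theorem stmt5 {K : Type*} [Field K] [CharZero K] (n d : ℕ) (mu q : K)
    (hn : 0 < n) (hd : 2 ≤ d) (hdvd : d ∣ n)
    (h1 : q ^ d = 1) (h2 : ∀ k : ℕ, 0 < k → k < d → q ^ k ≠ 1) :
    ∃ B : Module.Basis (Fin (n / d)) K (Subalgebra.center K (AAlg K n d mu q)),
      ∀ i : Fin (n / d), (B i : AAlg K n d mu q) = Agen K n d mu q ^ (d * (i : ℕ)) :=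
  stmt5_general n d mu q hn hd hdvd h1 h2
end

section
/- Let Q be a quiver and KQ^c its path coalgebra. For vertices x, y ∈ Q₀, the space of (x,y)-primitive elements P_{x,y}(KQ^c) equals y(KQ₁)x ⊕ K(x − y), where y(KQ₁)x is the K-span of all arrows from x to y. In particular, there is a non-trivial (x,y)-primitive element in KQ^c if and only if there is an arrow from x to y in Q. -/
open TensorProduct

universe u v

/-- The type indexing the basis of the path coalgebra: all paths of the quiver. -/
abbrev PathsOf (V : Type u) [Quiver.{v + 1} V] : Type (max u (v + 1)) :=
  Σ a b : V, Quiver.Path a b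

variable (K : Type*) [Field K] (V : Type u) [Quiver.{v + 1} V] [DecidableEq V]

/-- The underlying vector space of the path coalgebra `KQ^c`: the free `K`-module on
the set of paths of `Q`. -/
abbrev PathCoalg := PathsOf V →₀ K

variable {V}

/-- The basis element of the path coalgebra given by a path. -/
noncomputable def pelt {a b : V} (p : Quiver.Path a b) : PathCoalg K V :=
  Finsupp.single ⟨a, b, p⟩ 1

/-- The group-like basis element of the path coalgebra given by a vertex. -/
noncomputable def vtx (a : V) : PathCoalg K V := pelt K (Quiver.Path.nil (a := a))

/-- The linear map on the path coalgebra sending a path `β : a' → b` to `f∘β : a' → c`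
(and paths not ending at `b` to `0`), for an arrow `f : b ⟶ c`. -/
noncomputable def consL {b c : V} (f : b ⟶ c) : PathCoalg K V →ₗ[K] PathCoalg K V :=
  Finsupp.lsum K fun p : PathsOf V =>
    if h : p.2.1 = b then
      LinearMap.toSpanSingleton K (PathCoalg K V) (pelt K ((p.2.2.cast rfl h).cons f))
    else 0

/-- The comultiplication of the path coalgebra on a path `p`:
`Δ(p) = ∑_{βα = p} β ⊗ α`, defined by recursion on `p`. -/
noncomputable def deltaPath {a : V} : ∀ {b : V}, Quiver.Path a b →
    TensorProduct K (PathCoalg K V) (PathCoalg K V)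
  | _, Quiver.Path.nil => vtx K a ⊗ₜ[K] vtx K a
  | c, Quiver.Path.cons p f =>
      TensorProduct.map (consL K f) LinearMap.id (deltaPath p) +
        vtx K c ⊗ₜ[K] pelt K (p.cons f)

/-- The comultiplication `Δ : KQ^c → KQ^c ⊗ KQ^c` of the path coalgebra,
`Δ(p) = ∑_{βα = p} β ⊗ α`. -/
noncomputable def pathComul :
    PathCoalg K V →ₗ[K] TensorProduct K (PathCoalg K V) (PathCoalg K V) :=
  Finsupp.lsum K fun p : PathsOf V =>
    LinearMap.toSpanSingleton K _ (deltaPath K p.2.2)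

/-! Compare the coefficients of `q ⊗ r` on both sides of `Δ c = c ⊗ x + y ⊗ c`. If `r` ends where
`q` starts and `s` is `r` followed by `q`, this gives `c s = c q · [r = x] + [q = y] · c r`;
otherwise it gives `0 = c q · [r = x] + [q = y] · c r`. Cutting a path of length at least two into
two non-trivial pieces shows that its coefficient vanishes. Cutting an arrow `a ⟶ b` against the
vertex `a` or `b` shows that only arrows `x ⟶ y` survive. Cutting a vertex `m` as `m` followed by
`m`, together with the non-composable pair `(y, x)`, shows that the vertex part of `c` is
`c x · (x - y)`. Conversely, the arrows `x ⟶ y` and `x - y` are primitive, and for `x ≠ y` the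
element `x - y` has a nonzero vertex coefficient, which nothing in the span of the arrows has. -/

namespace PathsOf

variable {V : Type u} [Quiver.{v + 1} V]

lemma mk_eq_mk_iff {a a' b b' : V} {p : Quiver.Path a b} {p' : Quiver.Path a' b'} :
    (⟨a, b, p⟩ : PathsOf V) = ⟨a', b', p'⟩ ↔ a = a' ∧ b = b' ∧ p ≍ p' := by
  constructor
  · rintro ⟨⟩
    exact ⟨rfl, rfl, .rfl⟩
  · rintro ⟨rfl, rfl, ⟨⟩⟩
    rfl

lemma mk_cons_eq_mk_cons_iff {a a' b c : V} (f : b ⟶ c) (p : Quiver.Path a b)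
    (p' : Quiver.Path a' b) :
    (⟨a, c, p.cons f⟩ : PathsOf V) = ⟨a', c, p'.cons f⟩ ↔
      (⟨a, b, p⟩ : PathsOf V) = ⟨a', b, p'⟩ := by
  constructor
  · intro h
    obtain rfl : a = a' := congrArg Sigma.fst h
    simp only [Sigma.mk.inj_iff, heq_iff_eq, true_and] at h ⊢
    exact eq_of_heq (Quiver.Path.heq_of_cons_eq_cons h)
  · intro h
    obtain rfl : a = a' := congrArg Sigma.fst h
    simp_all

lemma mk_nil_ne_mk_cons {m a b c : V} (p : Quiver.Path a b) (f : b ⟶ c) :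
    (⟨m, m, .nil⟩ : PathsOf V) ≠ ⟨a, c, p.cons f⟩ := by
  intro h
  obtain ⟨rfl, rfl, h⟩ := mk_eq_mk_iff.mp h
  exact Quiver.Path.nil_ne_cons _ _ (eq_of_heq h)

inductive IsComp : PathsOf V → PathsOf V → PathsOf V → Prop
  | mk {a m b : V} (r : Quiver.Path a m) (q : Quiver.Path m b) :
      IsComp ⟨a, m, r⟩ ⟨m, b, q⟩ ⟨a, b, r.comp q⟩

lemma isComp_mk_iff {a m b : V} (r : Quiver.Path a m) (q : Quiver.Path m b) {s : PathsOf V} :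
    IsComp ⟨a, m, r⟩ ⟨m, b, q⟩ s ↔ s = ⟨a, b, r.comp q⟩ := by
  refine ⟨fun h => ?_, by rintro rfl; exact .mk r q⟩
  cases h
  rfl

lemma IsComp.target_eq_source {r q s : PathsOf V} (h : IsComp r q s) : r.2.1 = q.1 := by
  cases h
  rfl

lemma isComp_nil_iff {a : V} {r q : PathsOf V} :
    IsComp r q ⟨a, a, .nil⟩ ↔ r = ⟨a, a, .nil⟩ ∧ q = ⟨a, a, .nil⟩ := by
  refine ⟨fun h => ?_, by rintro ⟨rfl, rfl⟩; exact .mk .nil .nil⟩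
  generalize hs : (⟨a, a, .nil⟩ : PathsOf V) = s at h
  obtain ⟨r, q⟩ := h
  obtain ⟨rfl, rfl, hs⟩ := mk_eq_mk_iff.mp hs
  rw [heq_iff_eq, eq_comm, Quiver.Path.comp_eq_nil_iff] at hs
  obtain rfl := Quiver.Path.eq_of_length_zero r hs.1
  rw [Quiver.Path.eq_nil_of_length_zero r hs.1, Quiver.Path.eq_nil_of_length_zero q hs.2]
  exact ⟨rfl, rfl⟩

lemma isComp_cons_iff {a a' b c : V} (f : b ⟶ c) (p : Quiver.Path a b)
    (p' : Quiver.Path a' b) {r : PathsOf V} :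
    IsComp r ⟨a', c, p'.cons f⟩ ⟨a, c, p.cons f⟩ ↔ IsComp r ⟨a', b, p'⟩ ⟨a, b, p⟩ := by
  refine ⟨fun h => ?_, by rintro ⟨r, q⟩; exact .mk _ _⟩
  generalize hs : (⟨a, c, p.cons f⟩ : PathsOf V) = s at h
  obtain ⟨r, q⟩ := h
  obtain ⟨rfl, -, hs⟩ := mk_eq_mk_iff.mp hs
  rw [heq_iff_eq, Quiver.Path.comp_cons] at hs
  obtain rfl := eq_of_heq (Quiver.Path.heq_of_cons_eq_cons hs)
  exact .mk _ _

lemma isComp_cons_iff_of_forall_ne {a b c : V} (f : b ⟶ c) (p : Quiver.Path a b)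
    {q r : PathsOf V} (hq : ∀ (a' : V) (p' : Quiver.Path a' b), q ≠ ⟨a', c, p'.cons f⟩) :
    IsComp r q ⟨a, c, p.cons f⟩ ↔ r = ⟨a, c, p.cons f⟩ ∧ q = ⟨c, c, .nil⟩ := by
  refine ⟨fun h => ?_, by rintro ⟨rfl, rfl⟩; exact .mk _ .nil⟩
  generalize hs : (⟨a, c, p.cons f⟩ : PathsOf V) = s at h
  obtain ⟨r, q⟩ := h
  cases q with
  | nil =>
    obtain ⟨rfl, rfl, -⟩ := mk_eq_mk_iff.mp hs
    exact ⟨rfl, rfl⟩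
  | cons q g =>
    obtain ⟨rfl, rfl, hs⟩ := mk_eq_mk_iff.mp hs
    rw [heq_iff_eq, Quiver.Path.comp_cons] at hs
    obtain rfl := Quiver.Path.obj_eq_of_cons_eq_cons hs
    obtain rfl := eq_of_heq (Quiver.Path.hom_heq_of_cons_eq_cons hs)
    exact absurd rfl (hq _ q)

end PathsOf

namespace PathCoalg

open PathsOf

variable {K : Type*} [Field K] {V : Type u} [Quiver.{v + 1} V]

variable (K) in
noncomputable def tensorCoeff (q r : PathsOf V) :
    PathCoalg K V ⊗[K] PathCoalg K V →ₗ[K] K :=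
  TensorProduct.lift ((LinearMap.mul K K).compl₁₂ (Finsupp.lapply q) (Finsupp.lapply r))

@[simp]
lemma tensorCoeff_tmul (q r : PathsOf V) (x y : PathCoalg K V) :
    tensorCoeff K q r (x ⊗ₜ y) = x q * y r := by
  simp [tensorCoeff]

lemma pelt_apply {a b : V} (p : Quiver.Path a b) (s : PathsOf V)
    [Decidable (⟨a, b, p⟩ = s)] : pelt K p s = if ⟨a, b, p⟩ = s then 1 else 0 := by
  rw [pelt, Finsupp.single_apply]

@[simp]
lemma vtx_apply_cons (m : V) {a b c : V} (p : Quiver.Path a b) (f : b ⟶ c) :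
    vtx K m ⟨a, c, p.cons f⟩ = 0 :=
  Finsupp.single_eq_of_ne (mk_nil_ne_mk_cons p f).symm

variable (K) in
noncomputable def arrowSpan (x y : V) : Submodule K (PathCoalg K V) :=
  Submodule.span K (Set.range fun f : x ⟶ y => pelt K (Quiver.Path.nil.cons f))

lemma arrowSpan_eq_supported (x y : V) :
    arrowSpan K x y = Finsupp.supported K K
      (Set.range fun f : x ⟶ y => (⟨x, y, Quiver.Path.nil.cons f⟩ : PathsOf V)) := by
  rw [Finsupp.supported_eq_span_single, ← Set.range_comp]
  rfl

variable [DecidableEq V]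

@[simp]
lemma vtx_apply_nil (m a : V) : vtx K m ⟨a, a, .nil⟩ = if m = a then 1 else 0 := by
  classical
  rw [vtx, pelt, Finsupp.single_apply]
  exact if_congr ⟨fun h => (mk_eq_mk_iff.mp h).1, by rintro rfl; rfl⟩ rfl rfl

lemma consL_single {a b c : V} (f : b ⟶ c) (p : Quiver.Path a b) (k : K) :
    consL K f (Finsupp.single ⟨a, b, p⟩ k) = Finsupp.single ⟨a, c, p.cons f⟩ k := by
  simp [consL, pelt]

lemma consL_single_of_ne {b c : V} (f : b ⟶ c) {s : PathsOf V} (hs : s.2.1 ≠ b) (k : K) :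
    consL K f (Finsupp.single s k) = 0 := by
  simp [consL, hs]

lemma consL_apply_cons {a b c : V} (f : b ⟶ c) (p : Quiver.Path a b) (x : PathCoalg K V) :
    consL K f x ⟨a, c, p.cons f⟩ = x ⟨a, b, p⟩ := by
  induction x using Finsupp.induction_linear with
  | zero => simp
  | add x y hx hy => simp [hx, hy]
  | single s k =>
    classical
    obtain ⟨a', b', p'⟩ := s
    by_cases hb : b' = b
    · subst hb
      simp only [consL_single, Finsupp.single_apply, mk_cons_eq_mk_cons_iff]
    · rw [consL_single_of_ne f hb, Finsupp.single_apply, if_neg, Finsupp.zero_apply]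
      exact fun h => hb (congrArg (fun s : PathsOf V => s.2.1) h)

lemma consL_apply_of_forall_ne {b c : V} (f : b ⟶ c) {q : PathsOf V}
    (hq : ∀ (a : V) (p : Quiver.Path a b), q ≠ ⟨a, c, p.cons f⟩) (x : PathCoalg K V) :
    consL K f x q = 0 := by
  induction x using Finsupp.induction_linear with
  | zero => simp
  | add x y hx hy => simp [hx, hy]
  | single s k =>
    classical
    obtain ⟨a', b', p'⟩ := s
    by_cases hb : b' = b
    · subst hb
      rw [consL_single, Finsupp.single_apply, if_neg (hq a' p').symm]
    · rw [consL_single_of_ne f hb, Finsupp.zero_apply]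

lemma tensorCoeff_map_consL_cons {a b c : V} (f : b ⟶ c) (p : Quiver.Path a b)
    (r : PathsOf V) (t : PathCoalg K V ⊗[K] PathCoalg K V) :
    tensorCoeff K ⟨a, c, p.cons f⟩ r (TensorProduct.map (consL K f) LinearMap.id t) =
      tensorCoeff K ⟨a, b, p⟩ r t := by
  rw [← LinearMap.comp_apply]
  congr 1
  ext x y
  simp [consL_apply_cons]

lemma tensorCoeff_map_consL_of_forall_ne {b c : V} (f : b ⟶ c) {q : PathsOf V}
    (hq : ∀ (a : V) (p : Quiver.Path a b), q ≠ ⟨a, c, p.cons f⟩)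
    (r : PathsOf V) (t : PathCoalg K V ⊗[K] PathCoalg K V) :
    tensorCoeff K q r (TensorProduct.map (consL K f) LinearMap.id t) = 0 := by
  have h : tensorCoeff K q r ∘ₗ TensorProduct.map (consL K f) LinearMap.id = 0 := by
    ext x y
    simp [consL_apply_of_forall_ne f hq]
  exact LinearMap.congr_fun h t

open Classical in
lemma tensorCoeff_deltaPath {a b : V} (p : Quiver.Path a b) (q r : PathsOf V) :
    tensorCoeff K q r (deltaPath K p) = if IsComp r q ⟨a, b, p⟩ then 1 else 0 := by
  induction p generalizing q r with
  | nil =>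
    rw [deltaPath, tensorCoeff_tmul, vtx, pelt_apply, pelt_apply, isComp_nil_iff]
    simp only [eq_comm (a := r), eq_comm (a := q), ite_zero_mul_ite_zero, mul_one, and_comm]
  | @cons b c p f ih =>
    rw [deltaPath, map_add, tensorCoeff_tmul]
    by_cases hq : ∃ (a' : V) (p' : Quiver.Path a' b), q = ⟨a', c, p'.cons f⟩
    · obtain ⟨a', p', rfl⟩ := hq
      rw [tensorCoeff_map_consL_cons, ih, vtx_apply_cons, zero_mul, add_zero, isComp_cons_iff]
    · simp only [not_exists] at hq
      rw [tensorCoeff_map_consL_of_forall_ne f hq, zero_add, isComp_cons_iff_of_forall_ne f p hq,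
        vtx, pelt_apply, pelt_apply]
      simp only [eq_comm (a := r), eq_comm (a := q), ite_zero_mul_ite_zero, mul_one, and_comm]

open Classical in
lemma tensorCoeff_pathComul_single (q r s : PathsOf V) (k : K) :
    tensorCoeff K q r (pathComul K (Finsupp.single s k)) = if IsComp r q s then k else 0 := by
  rw [pathComul, Finsupp.lsum_single, LinearMap.toSpanSingleton_apply, map_smul,
    tensorCoeff_deltaPath, smul_eq_mul, mul_ite, mul_one, mul_zero]

lemma tensorCoeff_pathComul_mk {a m b : V} (r : Quiver.Path a m) (q : Quiver.Path m b)
    (x : PathCoalg K V) :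
    tensorCoeff K ⟨m, b, q⟩ ⟨a, m, r⟩ (pathComul K x) = x ⟨a, b, r.comp q⟩ := by
  classical
  induction x using Finsupp.induction_linear with
  | zero => simp
  | add x y hx hy => simp [hx, hy]
  | single s k =>
    simp only [tensorCoeff_pathComul_single, isComp_mk_iff, Finsupp.single_apply]

lemma tensorCoeff_pathComul_of_ne {q r : PathsOf V} (h : r.2.1 ≠ q.1) (x : PathCoalg K V) :
    tensorCoeff K q r (pathComul K x) = 0 := by
  classical
  induction x using Finsupp.induction_linear with
  | zero => simp
  | add x y hx hy => simp [hx, hy]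
  | single s k => rw [tensorCoeff_pathComul_single, if_neg (fun hs => h hs.target_eq_source)]

lemma pathComul_pelt {a b : V} (p : Quiver.Path a b) :
    pathComul K (pelt K p) = deltaPath K p := by
  rw [pelt, pathComul, Finsupp.lsum_single, LinearMap.toSpanSingleton_apply_one]

variable (K) in
noncomputable def primitives (x y : V) : Submodule K (PathCoalg K V) :=
  LinearMap.eqLocus (pathComul K)
    ((TensorProduct.mk K _ _).flip (vtx K x) + TensorProduct.mk K _ _ (vtx K y))

variable {x y : V} {c : PathCoalg K V}

lemma mem_primitives :
    c ∈ primitives K x y ↔ pathComul K c = c ⊗ₜ vtx K x + vtx K y ⊗ₜ c := by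
  simp [primitives]

lemma pelt_nil_cons_mem_primitives (f : x ⟶ y) :
    pelt K (Quiver.Path.nil.cons f) ∈ primitives K x y := by
  rw [mem_primitives, pathComul_pelt, deltaPath, deltaPath, TensorProduct.map_tmul, vtx, pelt,
    consL_single]
  rfl

lemma vtx_sub_vtx_mem_primitives : vtx K x - vtx K y ∈ primitives K x y := by
  rw [mem_primitives, map_sub, vtx, vtx, pathComul_pelt, pathComul_pelt, deltaPath, deltaPath,
    TensorProduct.sub_tmul, TensorProduct.tmul_sub]
  abel

lemma apply_comp_of_mem_primitives (hc : c ∈ primitives K x y) {a m b : V}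
    (r : Quiver.Path a m) (q : Quiver.Path m b) :
    c ⟨a, b, r.comp q⟩ = c ⟨m, b, q⟩ * vtx K x ⟨a, m, r⟩ + vtx K y ⟨m, b, q⟩ * c ⟨a, m, r⟩ := by
  simpa [tensorCoeff_pathComul_mk] using
    congrArg (tensorCoeff K ⟨m, b, q⟩ ⟨a, m, r⟩) (mem_primitives.mp hc)

lemma apply_vtx_add_apply_vtx_of_mem_primitives (hc : c ∈ primitives K x y) (hxy : x ≠ y) :
    c ⟨y, y, .nil⟩ + c ⟨x, x, .nil⟩ = 0 := by
  have h := congrArg (tensorCoeff K ⟨y, y, .nil⟩ ⟨x, x, .nil⟩) (mem_primitives.mp hc)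
  rw [tensorCoeff_pathComul_of_ne (q := ⟨y, y, .nil⟩) (r := ⟨x, x, .nil⟩) hxy] at h
  simpa [hxy, Ne.symm hxy, eq_comm] using h

lemma apply_nil_of_mem_primitives (hc : c ∈ primitives K x y) (m : V) :
    c ⟨m, m, .nil⟩ =
      c ⟨x, x, .nil⟩ * ((if x = m then 1 else 0) - if y = m then 1 else 0) := by
  have hm := apply_comp_of_mem_primitives hc (Quiver.Path.nil (a := m)) .nil
  simp only [Quiver.Path.comp_nil, vtx_apply_nil] at hm
  by_cases hx : x = m <;> by_cases hy : y = m
  · subst hx hy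
    simpa using hm
  · subst hx
    simp [hy]
  · subst hy
    simpa [hx, eq_neg_iff_add_eq_zero] using apply_vtx_add_apply_vtx_of_mem_primitives hc hx
  · simpa [hx, hy] using hm

lemma apply_nil_cons_of_mem_primitives (hc : c ∈ primitives K x y) {a b : V} (f : a ⟶ b)
    (h : a ≠ x ∨ b ≠ y) : c ⟨a, b, Quiver.Path.nil.cons f⟩ = 0 := by
  rcases h with ha | hb
  · simpa [Ne.symm ha] using apply_comp_of_mem_primitives hc .nil (Quiver.Path.nil.cons f)
  · simpa [Ne.symm hb] using apply_comp_of_mem_primitives hc (Quiver.Path.nil.cons f) .nil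

lemma apply_cons_cons_of_mem_primitives (hc : c ∈ primitives K x y) {a b m d : V}
    (p : Quiver.Path a b) (g : b ⟶ m) (f : m ⟶ d) : c ⟨a, d, (p.cons g).cons f⟩ = 0 := by
  simpa using apply_comp_of_mem_primitives hc (p.cons g) (Quiver.Path.nil.cons f)

lemma sub_smul_mem_arrowSpan_of_mem_primitives (hc : c ∈ primitives K x y) :
    c - c ⟨x, x, .nil⟩ • (vtx K x - vtx K y) ∈ arrowSpan K x y := by
  rw [arrowSpan_eq_supported, Finsupp.mem_supported']
  rintro ⟨a, b, p⟩ hp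
  cases p with
  | nil => simp [apply_nil_of_mem_primitives hc a]
  | cons p f =>
    cases p with
    | nil =>
      suffices h : a ≠ x ∨ b ≠ y by simp [apply_nil_cons_of_mem_primitives hc f h]
      by_contra! h
      obtain ⟨rfl, rfl⟩ := h
      exact hp ⟨f, rfl⟩
    | cons p g => simp [apply_cons_cons_of_mem_primitives hc p g f]

variable (K x y)

lemma primitives_eq_arrowSpan_sup :
    primitives K x y = arrowSpan K x y ⊔ K ∙ (vtx K x - vtx K y) := by
  refine le_antisymm (fun c hc => ?_) (sup_le ?_ ?_)
  · rw [← sub_add_cancel c (c ⟨x, x, .nil⟩ • (vtx K x - vtx K y))]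
    exact Submodule.add_mem_sup (sub_smul_mem_arrowSpan_of_mem_primitives hc)
      (Submodule.smul_mem _ _ (Submodule.mem_span_singleton_self _))
  · exact Submodule.span_le.mpr (Set.range_subset_iff.mpr pelt_nil_cons_mem_primitives)
  · exact (Submodule.span_singleton_le_iff_mem _ _).mpr vtx_sub_vtx_mem_primitives

lemma disjoint_arrowSpan_span_vtx_sub_vtx :
    Disjoint (arrowSpan K x y) (K ∙ (vtx K x - vtx K y)) := by
  rw [Submodule.disjoint_span_singleton, arrowSpan_eq_supported, Finsupp.mem_supported']
  intro h
  have hx := h ⟨x, x, .nil⟩ fun ⟨f, hf⟩ => mk_nil_ne_mk_cons _ f hf.symm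
  obtain rfl : x = y := by by_contra hxy; simp [Ne.symm hxy] at hx
  exact sub_self _

lemma exists_mem_primitives_notMem_span_iff :
    (∃ c, c ∈ primitives K x y ∧ c ∉ K ∙ (vtx K x - vtx K y)) ↔ Nonempty (x ⟶ y) := by
  constructor
  · rintro ⟨c, hc, hcl⟩
    by_contra h
    have hbot : arrowSpan K x y = ⊥ := by
      rw [arrowSpan, Set.range_eq_empty_iff.mpr (not_nonempty_iff.mp h), Submodule.span_empty]
    rw [primitives_eq_arrowSpan_sup, hbot, bot_sup_eq] at hc
    exact hcl hc
  · rintro ⟨f⟩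
    refine ⟨_, pelt_nil_cons_mem_primitives f, fun h => ?_⟩
    exact Finsupp.single_ne_zero.mpr one_ne_zero <|
      Submodule.disjoint_def.mp (disjoint_arrowSpan_span_vtx_sub_vtx K x y) _
        (Submodule.subset_span ⟨f, rfl⟩) h

end PathCoalg

/-- for vertices `x, y` of a quiver `Q`, the `(x,y)`-primitive elements of
the path coalgebra `KQ^c` are exactly `y(KQ₁)x ⊕ K(x - y)`, the (direct) sum of the span
of the arrows from `x` to `y` and the line through `x - y`.  In particular there is a
non-trivial `(x,y)`-primitive element iff there is an arrow from `x` to `y`. -/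
theorem stmt9 {K : Type*} [Field K] {V : Type u} [Quiver.{v + 1} V] [DecidableEq V]
    (x y : V) :
    let arrowSpan : Submodule K (PathCoalg K V) :=
      Submodule.span K (Set.range fun f : x ⟶ y => pelt K (Quiver.Path.nil.cons f))
    let line : Submodule K (PathCoalg K V) := Submodule.span K {vtx K x - vtx K y}
    {c : PathCoalg K V | pathComul K c = c ⊗ₜ[K] vtx K x + vtx K y ⊗ₜ[K] c} =
        ↑(arrowSpan ⊔ line) ∧
      arrowSpan ⊓ line = ⊥ ∧
      ((∃ c : PathCoalg K V,
          pathComul K c = c ⊗ₜ[K] vtx K x + vtx K y ⊗ₜ[K] c ∧ c ∉ line) ↔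
        Nonempty (x ⟶ y)) := by
  intro arrowSpan line
  have hP : {c | pathComul K c = c ⊗ₜ[K] vtx K x + vtx K y ⊗ₜ[K] c} =
      PathCoalg.primitives K x y :=
    Set.ext fun _ => PathCoalg.mem_primitives.symm
  refine ⟨hP.trans congr(($(PathCoalg.primitives_eq_arrowSpan_sup K x y) : Set (PathCoalg K V))),
    disjoint_iff.mp (PathCoalg.disjoint_arrowSpan_span_vtx_sub_vtx K x y), ?_⟩
  simpa only [PathCoalg.mem_primitives] using PathCoalg.exists_mem_primitives_notMem_span_iff K x y
end

section
/- Let q ∈ K be an n-th root of unity of order d with d dividing n and d ≥ 2, and μ ∈ K. The algebra A(n, d, μ, q) generated by g, x with relations g^n = 1, x^d = μ(1 − g^d), xg = qgx has K-dimension n·d, with basis {g^i x^j : 0 ≤ i ≤ n−1, 0 ≤ j ≤ d−1}. -/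
open Submodule in
theorem span_range_eq_top_of_mul_mem {R A ι : Type*} [CommSemiring R] [Semiring A] [Algebra R A]
    {s : Set A} (hs : Algebra.adjoin R s = ⊤) (v : ι → A) (h1 : 1 ∈ span R (Set.range v))
    (hmul : ∀ a ∈ s, ∀ i, a * v i ∈ span R (Set.range v)) :
    span R (Set.range v) = ⊤ := by
  set S := span R (Set.range v)
  have mul_mem_span (a : A) (ha : a ∈ s) (b : A) (hb : b ∈ S) : a * b ∈ S := by
    have : S.map (LinearMap.mulLeft R a) ≤ S := by
      rw [map_span, span_le]
      rintro _ ⟨_, ⟨i, rfl⟩, rfl⟩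
      exact hmul a ha i
    exact this ⟨b, hb, rfl⟩
  refine eq_top_iff'.mpr fun y => ?_
  have hy : y ∈ Algebra.adjoin R s := hs ▸ Algebra.mem_top
  suffices ∀ b ∈ S, y * b ∈ S by simpa using this 1 h1
  induction hy using Algebra.adjoin_induction with
  | mem a ha => exact mul_mem_span a ha
  | algebraMap r => exact fun b hb => by simpa [← Algebra.smul_def] using S.smul_mem r hb
  | add a c _ _ ha hc => exact fun b hb => by simpa [add_mul] using S.add_mem (ha b hb) (hc b hb)
  | mul a c _ _ ha hc => exact fun b hb => by simpa [mul_assoc] using ha _ (hc b hb)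

theorem RingQuot.adjoin_range_mkAlgHom_ι {R X : Type*} [CommSemiring R]
    (r : FreeAlgebra R X → FreeAlgebra R X → Prop) :
    Algebra.adjoin R (Set.range fun x => RingQuot.mkAlgHom R r (FreeAlgebra.ι R x)) = ⊤ := by
  rw [Set.range_comp' (RingQuot.mkAlgHom R r) (FreeAlgebra.ι R), ← AlgHom.map_adjoin,
    FreeAlgebra.adjoin_range_ι, Algebra.map_top, AlgHom.range_eq_top]
  exact RingQuot.mkAlgHom_surjective R r

open Fin.NatCast in
theorem pow_val_add_natCast {M : Type*} [Monoid M] {a : M} {n : ℕ} [NeZero n] (ha : a ^ n = 1)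
    (i : Fin n) (k : ℕ) : a ^ ((i + k : Fin n) : ℕ) = a ^ (i : ℕ) * a ^ k := by
  rw [Fin.val_add, Fin.val_natCast, ← pow_eq_pow_mod _ ha, pow_add, ← pow_eq_pow_mod _ ha]

section Relations

variable {K : Type*} [Field K] {n d : ℕ} {mu q : K}

theorem Agen_pow : Agen K n d mu q ^ n = 1 := by
  simpa [Agen] using RingQuot.mkAlgHom_rel K (ARel.g : ARel K n d mu q _ _)

theorem Axgen_pow : Axgen K n d mu q ^ d = mu • (1 - Agen K n d mu q ^ d) := by
  simpa [Agen, Axgen] using RingQuot.mkAlgHom_rel K (ARel.x : ARel K n d mu q _ _)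

theorem Axgen_mul_Agen :
    Axgen K n d mu q * Agen K n d mu q = q • (Agen K n d mu q * Axgen K n d mu q) := by
  simpa [Agen, Axgen] using RingQuot.mkAlgHom_rel K (ARel.comm : ARel K n d mu q _ _)

theorem Axgen_mul_Agen_pow (i : ℕ) :
    Axgen K n d mu q * Agen K n d mu q ^ i = q ^ i • (Agen K n d mu q ^ i * Axgen K n d mu q) := by
  induction i with
  | zero => simp
  | succ i ih =>
    rw [pow_succ, ← mul_assoc, ih, smul_mul_assoc, mul_assoc, Axgen_mul_Agen, mul_smul_comm,
      smul_smul, ← mul_assoc, ← pow_succ, ← pow_succ]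

theorem span_monomials_eq_top [NeZero n] [NeZero d] :
    Submodule.span K (Set.range fun p : Fin n × Fin d =>
      Agen K n d mu q ^ (p.1 : ℕ) * Axgen K n d mu q ^ (p.2 : ℕ)) = ⊤ := by
  set S := Submodule.span K (Set.range fun p : Fin n × Fin d =>
    Agen K n d mu q ^ (p.1 : ℕ) * Axgen K n d mu q ^ (p.2 : ℕ))
  have monomial_mem (i j : ℕ) (hj : j < d) : Agen K n d mu q ^ i * Axgen K n d mu q ^ j ∈ S := by
    rw [pow_eq_pow_mod i Agen_pow]
    exact Submodule.subset_span ⟨(⟨i % n, Nat.mod_lt i (NeZero.pos n)⟩, ⟨j, hj⟩), rfl⟩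
  refine span_range_eq_top_of_mul_mem (RingQuot.adjoin_range_mkAlgHom_ι _) _
    (by simpa using monomial_mem 0 0 (NeZero.pos d)) ?_
  rintro _ ⟨(_ | _), rfl⟩ ⟨i, j⟩
  · change Agen K n d mu q * (Agen K n d mu q ^ (i : ℕ) * Axgen K n d mu q ^ (j : ℕ)) ∈ S
    simpa only [← mul_assoc, ← pow_succ'] using monomial_mem (i + 1) j j.isLt
  · change Axgen K n d mu q * (Agen K n d mu q ^ (i : ℕ) * Axgen K n d mu q ^ (j : ℕ)) ∈ S
    rw [← mul_assoc, Axgen_mul_Agen_pow, smul_mul_assoc, mul_assoc, ← pow_succ']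
    refine S.smul_mem _ ?_
    by_cases hj : (j : ℕ) + 1 < d
    · exact monomial_mem i (j + 1) hj
    · rw [show (j : ℕ) + 1 = d by omega, Axgen_pow, mul_smul_comm, mul_sub, mul_one, ← pow_add]
      exact S.smul_mem _ (sub_mem (by simpa using monomial_mem i 0 (NeZero.pos d))
        (by simpa using monomial_mem (i + d) 0 (NeZero.pos d)))

end Relations

section Model

open Fin.NatCast

variable (K : Type*) [Field K] (n d : ℕ) (mu q : K) [NeZero n]

local notation "𝐞" => Pi.basisFun K (Fin n × Fin d)

/- `𝐞 (i, j)` stands for `g^i x^j`, and `modelG`, `modelX` are left multiplication by `g` and `x`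
computed with the relations: `x g^i x^j = q^i g^i x^(j+1)`, and `x^d = μ(1 - g^d)` at
`j = d - 1`. -/
noncomputable def modelG : Module.End K (Fin n × Fin d → K) :=
  (𝐞).constr K fun p => 𝐞 (p.1 + 1, p.2)

noncomputable def modelX [NeZero d] : Module.End K (Fin n × Fin d → K) :=
  (𝐞).constr K fun p =>
    if h : (p.2 : ℕ) + 1 < d then q ^ (p.1 : ℕ) • 𝐞 (p.1, ⟨p.2 + 1, h⟩)
    else (mu * q ^ (p.1 : ℕ)) • (𝐞 (p.1, 0) - 𝐞 (p.1 + d, 0))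

variable {K n d mu q}

theorem modelG_basis (i : Fin n) (j : Fin d) : modelG K n d (𝐞 (i, j)) = 𝐞 (i + 1, j) :=
  Module.Basis.constr_basis _ _ _ _

theorem modelG_pow_basis (k : ℕ) (i : Fin n) (j : Fin d) :
    (modelG K n d ^ k) (𝐞 (i, j)) = 𝐞 (i + k, j) := by
  induction k with
  | zero => simp
  | succ k ih => rw [pow_succ', Module.End.mul_apply, ih, modelG_basis, Nat.cast_succ, add_assoc]

theorem modelG_pow_self : modelG K n d ^ n = 1 :=
  (𝐞).ext fun ⟨i, j⟩ => by rw [modelG_pow_basis, Fin.natCast_self, add_zero, Module.End.one_apply]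

variable [NeZero d]

theorem modelX_basis_of_lt (i : Fin n) (j : Fin d) (h : (j : ℕ) + 1 < d) :
    modelX K n d mu q (𝐞 (i, j)) = q ^ (i : ℕ) • 𝐞 (i, ⟨j + 1, h⟩) := by
  rw [modelX, Module.Basis.constr_basis, dif_pos h]

theorem modelX_basis_last (i : Fin n) (j : Fin d) (h : (j : ℕ) + 1 = d) :
    modelX K n d mu q (𝐞 (i, j)) = (mu * q ^ (i : ℕ)) • (𝐞 (i, 0) - 𝐞 (i + d, 0)) := by
  rw [modelX, Module.Basis.constr_basis, dif_neg (by simp only; omega)]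

theorem modelX_pow_basis (k : ℕ) (i : Fin n) (j j' : Fin d) (h : (j : ℕ) + k = j') :
    (modelX K n d mu q ^ k) (𝐞 (i, j)) = q ^ ((i : ℕ) * k) • 𝐞 (i, j') := by
  induction k generalizing j with
  | zero => simp [Fin.ext (h.symm.trans (add_zero _))]
  | succ k ih =>
    rw [pow_succ, Module.End.mul_apply, modelX_basis_of_lt i j (by omega), map_smul,
      ih ⟨j + 1, _⟩ (by simp only; omega), smul_smul, ← pow_add, mul_add_one, add_comm]

theorem modelX_mul_modelG (hq : q ^ n = 1) :
    modelX K n d mu q * modelG K n d = q • (modelG K n d * modelX K n d mu q) := by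
  refine (𝐞).ext fun ⟨i, j⟩ => ?_
  have hq1 := pow_val_add_natCast hq i 1
  rw [Nat.cast_one, pow_one] at hq1
  simp only [Module.End.mul_apply, LinearMap.smul_apply, modelG_basis]
  by_cases hj : (j : ℕ) + 1 < d
  · rw [modelX_basis_of_lt _ _ hj, modelX_basis_of_lt _ _ hj, map_smul, modelG_basis, smul_smul,
      hq1, mul_comm]
  · rw [modelX_basis_last _ _ (by omega), modelX_basis_last _ _ (by omega), map_smul, map_sub,
      modelG_basis, modelG_basis, smul_smul, hq1, add_right_comm]
    ring_nf

theorem modelX_pow_self (hq : q ^ n = 1) (hqd : q ^ d = 1) :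
    modelX K n d mu q ^ d = mu • (1 - modelG K n d ^ d) := by
  refine (𝐞).ext fun ⟨i, j⟩ => ?_
  have hj := j.isLt
  -- `x^(d-1-j)` lifts `𝐞 (i, j)` to level `d - 1`, one more `x` wraps around to level `0`,
  -- and `x^j` brings both resulting vectors back to level `j`.
  have hsplit : modelX K n d mu q ^ d =
      modelX K n d mu q ^ (j : ℕ) * modelX K n d mu q * modelX K n d mu q ^ (d - 1 - j) := by
    rw [← pow_succ, ← pow_add]
    congr 1
    omega
  have hqi : q ^ ((i + d : Fin n) : ℕ) = q ^ (i : ℕ) := by rw [pow_val_add_natCast hq, hqd, mul_one]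
  have hcoeff : q ^ ((i : ℕ) * (d - 1 - j)) * (mu * q ^ (i : ℕ)) * q ^ ((i : ℕ) * j) = mu := by
    calc _ = mu * q ^ ((i : ℕ) * (d - 1 - j + 1 + j)) := by ring
      _ = mu := by rw [show d - 1 - j + 1 + j = d by omega, pow_mul', hqd, one_pow, mul_one]
  rw [hsplit, Module.End.mul_apply, Module.End.mul_apply,
    modelX_pow_basis _ i j ⟨d - 1, by omega⟩ (by simp only; omega), map_smul, map_smul,
    modelX_basis_last _ _ (by simp only; omega), map_smul, map_sub,
    modelX_pow_basis _ i 0 j (by simp), modelX_pow_basis _ (i + (d : Fin n)) 0 j (by simp),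
    pow_mul q ((i + (d : Fin n) : Fin n) : ℕ), hqi, ← pow_mul, LinearMap.smul_apply,
    LinearMap.sub_apply, Module.End.one_apply, modelG_pow_basis, ← smul_sub, smul_smul, smul_smul, hcoeff]

noncomputable def modelRep (hq : q ^ n = 1) (hqd : q ^ d = 1) :
    AAlg K n d mu q →ₐ[K] Module.End K (Fin n × Fin d → K) :=
  RingQuot.liftAlgHom K ⟨FreeAlgebra.lift K fun b => cond b (modelX K n d mu q) (modelG K n d),
    fun _ _ h => by
      cases h <;> simp [modelG_pow_self, modelX_pow_self hq hqd, modelX_mul_modelG hq]⟩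

theorem modelRep_Agen (hq : q ^ n = 1) (hqd : q ^ d = 1) :
    modelRep hq hqd (Agen K n d mu q) = modelG K n d := by
  simp [modelRep, Agen]

theorem modelRep_Axgen (hq : q ^ n = 1) (hqd : q ^ d = 1) :
    modelRep hq hqd (Axgen K n d mu q) = modelX K n d mu q := by
  simp [modelRep, Axgen]

theorem modelRep_monomial_basis_zero (hq : q ^ n = 1) (hqd : q ^ d = 1) (i : Fin n) (j : Fin d) :
    modelRep hq hqd (Agen K n d mu q ^ (i : ℕ) * Axgen K n d mu q ^ (j : ℕ)) (𝐞 (0, 0)) =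
      𝐞 (i, j) := by
  rw [map_mul, map_pow, map_pow, modelRep_Agen, modelRep_Axgen, Module.End.mul_apply,
    modelX_pow_basis _ 0 0 j (zero_add _), Fin.val_zero, zero_mul, pow_zero, one_smul,
    modelG_pow_basis, zero_add, Fin.cast_val_eq_self]

theorem linearIndependent_monomials (hq : q ^ n = 1) (hqd : q ^ d = 1) :
    LinearIndependent K fun p : Fin n × Fin d =>
      Agen K n d mu q ^ (p.1 : ℕ) * Axgen K n d mu q ^ (p.2 : ℕ) := by
  refine LinearIndependent.of_comp
    ((LinearMap.applyₗ (𝐞 (0, 0))).comp (modelRep hq hqd).toLinearMap) ?_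
  convert (𝐞).linearIndependent using 1
  funext ⟨i, j⟩
  exact modelRep_monomial_basis_zero hq hqd i j

end Model

theorem stmt16_general {K : Type*} [Field K] (n d : ℕ) (mu q : K)
    (hn : 0 < n) (hd : 2 ≤ d) (hqn : q ^ n = 1)
    (h1 : q ^ d = 1) :
    Module.finrank K (AAlg K n d mu q) = n * d ∧
    ∃ B : Module.Basis (Fin n × Fin d) K (AAlg K n d mu q),
      ∀ p : Fin n × Fin d,
        B p = Agen K n d mu q ^ (p.1 : ℕ) * Axgen K n d mu q ^ (p.2 : ℕ) := by
  have : NeZero n := ⟨hn.ne'⟩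
  have : NeZero d := ⟨by omega⟩
  let B := Module.Basis.mk (linearIndependent_monomials hqn h1)
    (span_monomials_eq_top (mu := mu)).ge
  exact ⟨by simp [Module.finrank_eq_card_basis B], B, Module.Basis.mk_apply _ _⟩

/-- for `q` an `n`-th root of unity of order `d`, `d ∣ n`, `d ≥ 2` and
`μ ∈ K`, the algebra `A(n, d, μ, q)` has `K`-dimension `n·d`, with basis
`{g^i x^j : 0 ≤ i ≤ n-1, 0 ≤ j ≤ d-1}`. -/
theorem stmt16 {K : Type*} [Field K] [CharZero K] (n d : ℕ) (mu q : K)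
    (hn : 0 < n) (hd : 2 ≤ d) (hdvd : d ∣ n) (hqn : q ^ n = 1)
    (h1 : q ^ d = 1) (h2 : ∀ k : ℕ, 0 < k → k < d → q ^ k ≠ 1) :
    Module.finrank K (AAlg K n d mu q) = n * d ∧
    ∃ B : Module.Basis (Fin n × Fin d) K (AAlg K n d mu q),
      ∀ p : Fin n × Fin d,
        B p = Agen K n d mu q ^ (p.1 : ℕ) * Axgen K n d mu q ^ (p.2 : ℕ) :=
  stmt16_general n d mu q hn hd hqn h1
end

section
/- Let α = (G, g, χ, μ) and α' = (G', g', χ', μ') be isomorphic group data over K, via a group isomorphism f: G → G' with f(g) = g', χ = χ' ∘ f, and μ = δ^d μ' for some nonzero δ ∈ K (d = order of χ(g)). Then the Hopf algebras A(α) and A(α') are isomorphic, where A(α) is generated by x and the elements h ∈ G with relations x^d = μ(1 − g^d) and xh = χ(h)hx, with Δ(x) = g ⊗ x + x ⊗ 1 and Δ(h) = h ⊗ h. -/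
open FreeAlgebra in
/-- Relations of the Hopf algebra `A(α)` attached to a group datum `α = (G, g, χ, μ)`
(with `d = o(χ(g))`): the group relations for the generators `h ∈ G`, together with
`x^d = μ(1 - g^d)` and `x·h = χ(h)·h·x`.  The generator `x` is indexed by `none` and
the generator `h` by `some h`. -/
inductive GDRel (K : Type*) [Field K] (G : Type*) [Group G] (g : G) (χ : G →* K)
    (μ : K) (d : ℕ) : FreeAlgebra K (Option G) → FreeAlgebra K (Option G) → Prop
  | mul (h h' : G) : GDRel K G g χ μ d (ι K (some h) * ι K (some h')) (ι K (some (h * h')))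
  | one : GDRel K G g χ μ d (ι K (some (1 : G))) 1
  | x : GDRel K G g χ μ d (ι K none ^ d) (μ • (1 - ι K (some g) ^ d))
  | comm (h : G) : GDRel K G g χ μ d (ι K none * ι K (some h)) (χ h • (ι K (some h) * ι K none))

/-- The Hopf algebra `A(α)` of a group datum `α = (G, g, χ, μ)`, `d = o(χ(g))`. -/
abbrev GDAlg (K : Type*) [Field K] (G : Type*) [Group G] (g : G) (χ : G →* K)
    (μ : K) (d : ℕ) := RingQuot (GDRel K G g χ μ d)

/-- The generator of `A(α)` corresponding to `h ∈ G`. -/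
noncomputable def GDgen (K : Type*) [Field K] (G : Type*) [Group G] (g : G) (χ : G →* K)
    (μ : K) (d : ℕ) (h : G) : GDAlg K G g χ μ d :=
  RingQuot.mkAlgHom K (GDRel K G g χ μ d) (FreeAlgebra.ι K (some h))

/-- The skew-primitive generator `x` of `A(α)`. -/
noncomputable def GDx (K : Type*) [Field K] (G : Type*) [Group G] (g : G) (χ : G →* K)
    (μ : K) (d : ℕ) : GDAlg K G g χ μ d :=
  RingQuot.mkAlgHom K (GDRel K G g χ μ d) (FreeAlgebra.ι K none)

section Aux
variable {K : Type*} [Field K] {G : Type*} [Group G] (g : G) (χ : G →* K) (μ : K) (d : ℕ)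

lemma GDgen_mul (h h' : G) :
    GDgen K G g χ μ d h * GDgen K G g χ μ d h' = GDgen K G g χ μ d (h * h') :=
  ((RingQuot.mkAlgHom K (GDRel K G g χ μ d)).map_mul _ _).symm.trans
    (RingQuot.mkAlgHom_rel K (GDRel.mul h h'))

lemma GDgen_one : GDgen K G g χ μ d 1 = 1 :=
  (RingQuot.mkAlgHom_rel K GDRel.one).trans (map_one _)

lemma GDx_pow : GDx K G g χ μ d ^ d = μ • (1 - GDgen K G g χ μ d g ^ d) := by
  have h := RingQuot.mkAlgHom_rel K (GDRel.x (K := K) (G := G) (g := g) (χ := χ) (μ := μ) (d := d))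
  simpa [GDx, GDgen, map_pow, map_smul, map_sub, map_one] using h

lemma GDx_comm (h : G) :
    GDx K G g χ μ d * GDgen K G g χ μ d h = χ h • (GDgen K G g χ μ d h * GDx K G g χ μ d) := by
  have h2 := RingQuot.mkAlgHom_rel K (GDRel.comm (K := K) (g := g) (χ := χ) (μ := μ) (d := d) h)
  simpa [GDx, GDgen, map_mul, map_smul] using h2

lemma GDAlg.algHom_ext {B : Type*} [Semiring B] [Algebra K B]
    {F₁ F₂ : GDAlg K G g χ μ d →ₐ[K] B}
    (hx : F₁ (GDx K G g χ μ d) = F₂ (GDx K G g χ μ d))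
    (hg : ∀ h, F₁ (GDgen K G g χ μ d h) = F₂ (GDgen K G g χ μ d h)) : F₁ = F₂ := by
  have key : F₁.comp (RingQuot.mkAlgHom K (GDRel K G g χ μ d))
      = F₂.comp (RingQuot.mkAlgHom K (GDRel K G g χ μ d)) := by
    apply FreeAlgebra.hom_ext
    funext o
    cases o with
    | none => exact hx
    | some h => exact hg h
  refine AlgHom.ext fun a => ?_
  obtain ⟨b, rfl⟩ := RingQuot.mkAlgHom_surjective K (GDRel K G g χ μ d) a
  exact AlgHom.congr_fun key b

variable {G' : Type*} [Group G'] (g' : G') (χ' : G' →* K) (μ' : K)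

/-- The algebra hom `A(α) → A(α')` induced by a morphism of group data. -/
noncomputable def GDmap (f : G →* G') (δ : K) (hf : f g = g')
    (hfχ : ∀ h : G, χ h = χ' (f h)) (hμ : μ = δ ^ d * μ') :
    GDAlg K G g χ μ d →ₐ[K] GDAlg K G' g' χ' μ' d :=
  RingQuot.liftAlgHom K ⟨FreeAlgebra.lift K
    (fun o => o.elim (δ • GDx K G' g' χ' μ' d) (fun h => GDgen K G' g' χ' μ' d (f h))), by
      rintro a b (⟨h, h'⟩ | _ | _ | h) <;>
        simp only [map_mul, map_pow, map_smul, map_sub, map_one, FreeAlgebra.lift_ι_apply,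
          Option.elim]
      · rw [GDgen_mul]
      · rw [GDgen_one]
      · rw [smul_pow, GDx_pow, hf, smul_smul, ← hμ]
      · rw [smul_mul_assoc, GDx_comm, hfχ h, smul_comm, mul_smul_comm]⟩

lemma GDmap_x (f : G →* G') (δ : K) (hf : f g = g')
    (hfχ : ∀ h : G, χ h = χ' (f h)) (hμ : μ = δ ^ d * μ') :
    GDmap g χ μ d g' χ' μ' f δ hf hfχ hμ (GDx K G g χ μ d) = δ • GDx K G' g' χ' μ' d := by
  simp [GDmap, GDx, RingQuot.liftAlgHom_mkAlgHom_apply]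

lemma GDmap_gen (f : G →* G') (δ : K) (hf : f g = g')
    (hfχ : ∀ h : G, χ h = χ' (f h)) (hμ : μ = δ ^ d * μ') (h : G) :
    GDmap g χ μ d g' χ' μ' f δ hf hfχ hμ (GDgen K G g χ μ d h) = GDgen K G' g' χ' μ' d (f h) := by
  simp [GDmap, GDgen, RingQuot.liftAlgHom_mkAlgHom_apply]

end Aux

open TensorProduct in
/-- isomorphic group data `α = (G, g, χ, μ)` and `α' = (G', g', χ', μ')`
(via a group isomorphism `f` with `f(g) = g'`, `χ = χ' ∘ f`, and `μ = δ^d·μ'` for some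
`δ ≠ 0`) yield isomorphic Hopf algebras `A(α) ≅ A(α')`: there is an algebra isomorphism
`F` with `F(x) = δ·x'`, `F(h) = f(h)`, and `F` is compatible with the comultiplications
determined by `Δ(x) = g ⊗ x + x ⊗ 1`, `Δ(h) = h ⊗ h` on both sides. -/
theorem stmt19 {K : Type*} [Field K] [CharZero K]
    (G G' : Type*) [Group G] [Fintype G] [Group G'] [Fintype G']
    (g : G) (g' : G') (hgc : ∀ h : G, g * h = h * g) (hgc' : ∀ h : G', g' * h = h * g')
    (χ : G →* K) (χ' : G' →* K) (μ μ' : K) (d : ℕ) (hdd : d = orderOf (χ g))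
    (hμ : orderOf g = orderOf (χ g) → μ = 0) (hχd : μ ≠ 0 → ∀ h : G, χ h ^ d = 1)
    (hμ' : orderOf g' = orderOf (χ' g') → μ' = 0) (hχd' : μ' ≠ 0 → ∀ h : G', χ' h ^ d = 1)
    (f : G ≃* G') (hf : f g = g') (hfχ : ∀ h : G, χ h = χ' (f h))
    (δ : K) (hδ : δ ≠ 0) (hμμ' : μ = δ ^ d * μ') :
    ∃ F : GDAlg K G g χ μ d ≃ₐ[K] GDAlg K G' g' χ' μ' d,
      F (GDx K G g χ μ d) = δ • GDx K G' g' χ' μ' d ∧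
      (∀ h : G, F (GDgen K G g χ μ d h) = GDgen K G' g' χ' μ' d (f h)) ∧
      ∀ (Δ : GDAlg K G g χ μ d →ₐ[K] GDAlg K G g χ μ d ⊗[K] GDAlg K G g χ μ d)
        (Δ' : GDAlg K G' g' χ' μ' d →ₐ[K] GDAlg K G' g' χ' μ' d ⊗[K] GDAlg K G' g' χ' μ' d),
        Δ (GDx K G g χ μ d) =
            GDgen K G g χ μ d g ⊗ₜ[K] GDx K G g χ μ d + GDx K G g χ μ d ⊗ₜ[K] 1 →
        (∀ h : G, Δ (GDgen K G g χ μ d h) = GDgen K G g χ μ d h ⊗ₜ[K] GDgen K G g χ μ d h) →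
        Δ' (GDx K G' g' χ' μ' d) =
            GDgen K G' g' χ' μ' d g' ⊗ₜ[K] GDx K G' g' χ' μ' d + GDx K G' g' χ' μ' d ⊗ₜ[K] 1 →
        (∀ h : G', Δ' (GDgen K G' g' χ' μ' d h) =
            GDgen K G' g' χ' μ' d h ⊗ₜ[K] GDgen K G' g' χ' μ' d h) →
        ∀ a : GDAlg K G g χ μ d,
          TensorProduct.map F.toLinearMap F.toLinearMap (Δ a) = Δ' (F a) := by
  have hf2 : f.symm.toMonoidHom g' = g := by simp [← hf]
  have hfχ2 : ∀ h : G', χ' h = χ (f.symm.toMonoidHom h) := fun h => by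
    rw [hfχ]; simp
  have hμ2 : μ' = δ⁻¹ ^ d * μ := by
    rw [hμμ', ← mul_assoc, ← mul_pow, inv_mul_cancel₀ hδ, one_pow, one_mul]
  have hfχ1 : ∀ h : G, χ h = χ' (f.toMonoidHom h) := hfχ
  have hf1 : f.toMonoidHom g = g' := hf
  let φ := GDmap g χ μ d g' χ' μ' f.toMonoidHom δ hf1 hfχ1 hμμ'
  let ψ := GDmap g' χ' μ' d g χ μ f.symm.toMonoidHom δ⁻¹ hf2 hfχ2 hμ2
  have hφx : φ (GDx K G g χ μ d) = δ • GDx K G' g' χ' μ' d :=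
    GDmap_x g χ μ d g' χ' μ' f.toMonoidHom δ hf1 hfχ1 hμμ'
  have hφgen : ∀ h : G, φ (GDgen K G g χ μ d h) = GDgen K G' g' χ' μ' d (f h) :=
    GDmap_gen g χ μ d g' χ' μ' f.toMonoidHom δ hf1 hfχ1 hμμ'
  have hψx : ψ (GDx K G' g' χ' μ' d) = δ⁻¹ • GDx K G g χ μ d :=
    GDmap_x g' χ' μ' d g χ μ f.symm.toMonoidHom δ⁻¹ hf2 hfχ2 hμ2
  have hψgen : ∀ h : G', ψ (GDgen K G' g' χ' μ' d h) = GDgen K G g χ μ d (f.symm h) :=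
    GDmap_gen g' χ' μ' d g χ μ f.symm.toMonoidHom δ⁻¹ hf2 hfχ2 hμ2
  have h1 : φ.comp ψ = AlgHom.id K (GDAlg K G' g' χ' μ' d) := by
    apply GDAlg.algHom_ext
    · simp [AlgHom.comp_apply, hψx, map_smul, hφx, smul_smul, mul_inv_cancel₀ hδ, inv_mul_cancel₀ hδ]
    · intro h
      simp [AlgHom.comp_apply, hψgen, hφgen]
  have h2 : ψ.comp φ = AlgHom.id K (GDAlg K G g χ μ d) := by
    apply GDAlg.algHom_ext
    · simp [AlgHom.comp_apply, hφx, map_smul, hψx, smul_smul, mul_inv_cancel₀ hδ, inv_mul_cancel₀ hδ]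
    · intro h
      simp [AlgHom.comp_apply, hφgen, hψgen]
  refine ⟨AlgEquiv.ofAlgHom φ ψ h1 h2, hφx, hφgen, ?_⟩
  intro Δ Δ' hΔx hΔg hΔ'x hΔ'g a
  set Φ := AlgEquiv.ofAlgHom φ ψ h1 h2 with hΦ
  have key : (Algebra.TensorProduct.map φ φ).comp Δ = Δ'.comp φ := by
    apply GDAlg.algHom_ext
    · simp only [AlgHom.comp_apply, hΔx, hφx, map_smul, hΔ'x, map_add,
        Algebra.TensorProduct.map_tmul, map_one, hφgen, smul_add, tmul_smul,
        smul_tmul', hf]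
    · intro h
      simp [AlgHom.comp_apply, hΔg h, hΔ'g, hφgen h]
  have hM : TensorProduct.map Φ.toLinearMap Φ.toLinearMap (Δ a)
      = Algebra.TensorProduct.map φ φ (Δ a) := by
    induction Δ a using TensorProduct.induction_on with
    | zero => simp
    | tmul u v => rfl
    | add u v hu hv => simp [map_add, hu, hv]
  rw [hM]
  exact AlgHom.congr_fun key a
end
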